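/- arXiv:2605.27802 — 3 statements merged into one kernel-verified Lean document; each statement's English description precedes it below -/
import Mathlib

section
/- Let d ≥ 1 and 0 < s < d. There exists a constant C > 0, depending only on d and s, such that for every v ∈ ℝ^d: ∫_{ℝ^d} |v − v_*|^{-s} (1 + |v_*|^2)^{-(d+1)/2} dv_* ≤ C (1 + |v|^2)^{-s/2}. -/
/-!
Split the integral at the ball of radius `⟨v⟩ / 4` around `v`, where `⟨v⟩ = √(1 + ‖v‖²)`;
let `d` be the dimension and `r` the decay exponent of the weight.
On that ball `⟨w⟩ ≥ ⟨v⟩ / 2`, so the weight is at most a multiple of `⟨v⟩^(-r)`, while by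
scaling the kernel `‖v - w‖^(-s)` integrates over the ball to a multiple of `⟨v⟩^(d - s)`; as
`r ≥ d` the product is `O(⟨v⟩^(-s))`. Off the ball the kernel is at most `(⟨v⟩ / 4)^(-s)`, and
the weight is integrable because `r > d`.
-/

open MeasureTheory Metric Module

theorem one_add_norm_sq_le_four_mul {E : Type*} [SeminormedAddCommGroup E] {v w : E}
    (h : ‖v - w‖ ≤ √(1 + ‖v‖ ^ 2) / 4) : 1 + ‖v‖ ^ 2 ≤ 4 * (1 + ‖w‖ ^ 2) := by
  set a := √(1 + ‖v‖ ^ 2)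
  have ha : a ^ 2 = 1 + ‖v‖ ^ 2 := Real.sq_sqrt (by positivity)
  by_cases hv : ‖v‖ ≤ a / 4
  · nlinarith [norm_nonneg v, norm_nonneg w]
  · have hw : ‖v‖ - a / 4 ≤ ‖w‖ := by linarith [norm_sub_norm_le v w]
    nlinarith [mul_self_le_mul_self (by linarith) hw, sq_nonneg (‖v‖ - a)]

section
variable {E : Type*} [NormedAddCommGroup E] [NormedSpace ℝ E] [FiniteDimensional ℝ E]
  [MeasurableSpace E] [BorelSpace E] (μ : Measure E) [μ.IsAddHaarMeasure]

theorem setIntegral_ball_norm_rpow (t : ℝ) {R : ℝ} (hR : 0 < R) :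
    ∫ x in ball 0 R, ‖x‖ ^ t ∂μ = R ^ (finrank ℝ E + t) * ∫ x in ball 0 1, ‖x‖ ^ t ∂μ := by
  have h := Measure.setIntegral_comp_smul_of_pos μ (fun x : E ↦ ‖x‖ ^ t) (ball 0 1) hR
  simp only [norm_smul, Real.norm_of_nonneg hR.le, smul_unitBall_of_pos hR, smul_eq_mul,
    Real.mul_rpow hR.le (norm_nonneg _), integral_const_mul] at h
  rw [Real.rpow_add hR, Real.rpow_natCast, mul_assoc, h, mul_inv_cancel_left₀ (by positivity)]

theorem setLIntegral_ball_norm_sub_rpow_neg {s : ℝ} (hs : 0 ≤ s) (hsn : s < finrank ℝ E)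
    (v : E) {R : ℝ} (hR : 0 < R) :
    ∫⁻ w in ball v R, ENNReal.ofReal (‖v - w‖ ^ (-s)) ∂μ =
      ENNReal.ofReal (R ^ (finrank ℝ E - s) * ∫ x in ball 0 1, ‖x‖ ^ (-s) ∂μ) := by
  have hball : (v - ·) ⁻¹' ball 0 R = ball v R := by
    ext w; simp [dist_eq_norm, norm_sub_rev]
  have hdim : 1 ≤ finrank ℝ E := by
    have : (0 : ℝ) < finrank ℝ E := hs.trans_lt hsn
    exact_mod_cast this
  rw [← hball, (Measure.measurePreserving_sub_left μ v).setLIntegral_comp_preimage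
      (f := fun x ↦ ENNReal.ofReal (‖x‖ ^ (-s))) measurableSet_ball (by fun_prop),
    ← ofReal_integral_eq_lintegral_ofReal, setIntegral_ball_norm_rpow μ _ hR, sub_eq_add_neg]
  · exact integrableOn_ball_of_norm_le_rpow (C := 1) hdim hsn
      (.of_forall fun x ↦ by simp [abs_of_nonneg (Real.rpow_nonneg (norm_nonneg x) _)])
      (measurable_norm.pow_const _).aestronglyMeasurable
  · exact .of_forall fun x ↦ by positivity

theorem setLIntegral_ball_norm_sub_rpow_mul_le {s r : ℝ} (hs : 0 ≤ s) (hsn : s < finrank ℝ E)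
    (hnr : finrank ℝ E ≤ r) (v : E) :
    ∫⁻ w in ball v (√(1 + ‖v‖ ^ 2) / 4),
        ENNReal.ofReal (‖v - w‖ ^ (-s) * (1 + ‖w‖ ^ 2) ^ (-r / 2)) ∂μ ≤
      ENNReal.ofReal
        (4 ^ (r / 2) * (∫ x in ball 0 1, ‖x‖ ^ (-s) ∂μ) * (1 + ‖v‖ ^ 2) ^ (-s / 2)) := by
  set A := 1 + ‖v‖ ^ 2
  set K := ∫ x in ball 0 1, ‖x‖ ^ (-s) ∂μ
  have hA : 1 ≤ A := le_add_of_nonneg_right (by positivity)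
  have hweight : ∀ w ∈ ball v (√A / 4), (1 + ‖w‖ ^ 2) ^ (-r / 2) ≤ (A / 4) ^ (-r / 2) := by
    intro w hw
    rw [mem_ball, dist_comm, dist_eq_norm] at hw
    have := one_add_norm_sq_le_four_mul hw.le
    exact Real.rpow_le_rpow_of_nonpos (by positivity) (by linarith) (by linarith)
  have hpow : (A / 4) ^ (-r / 2) * (√A / 4) ^ ((finrank ℝ E : ℝ) - s) ≤
      4 ^ (r / 2) * A ^ (-s / 2) := by
    have hweight_eq : (A / 4) ^ (-r / 2) = 4 ^ (r / 2) * A ^ (-r / 2) := by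
      rw [Real.div_rpow (by positivity) (by norm_num), div_eq_mul_inv,
        ← Real.rpow_neg (by norm_num), mul_comm, neg_div, neg_neg]
    have hradius : (√A / 4) ^ ((finrank ℝ E : ℝ) - s) ≤ A ^ (((finrank ℝ E : ℝ) - s) / 2) := by
      rw [show ((finrank ℝ E : ℝ) - s) / 2 = 1 / 2 * ((finrank ℝ E : ℝ) - s) by ring,
        Real.rpow_mul (by positivity), ← Real.sqrt_eq_rpow]
      exact Real.rpow_le_rpow (by positivity) (div_le_self (Real.sqrt_nonneg A) (by norm_num))
        (by linarith)
    calc (A / 4) ^ (-r / 2) * (√A / 4) ^ ((finrank ℝ E : ℝ) - s)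
        ≤ 4 ^ (r / 2) * (A ^ (-r / 2) * A ^ (((finrank ℝ E : ℝ) - s) / 2)) := by
          rw [hweight_eq, mul_assoc]
          gcongr
      _ ≤ 4 ^ (r / 2) * A ^ (-s / 2) := by
          rw [← Real.rpow_add (by positivity)]
          gcongr
          linarith
  calc ∫⁻ w in ball v (√A / 4), ENNReal.ofReal (‖v - w‖ ^ (-s) * (1 + ‖w‖ ^ 2) ^ (-r / 2)) ∂μ
      ≤ ∫⁻ w in ball v (√A / 4),
          ENNReal.ofReal ((A / 4) ^ (-r / 2)) * ENNReal.ofReal (‖v - w‖ ^ (-s)) ∂μ := by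
        refine setLIntegral_mono' measurableSet_ball fun w hw ↦ ?_
        rw [← ENNReal.ofReal_mul (by positivity), mul_comm ((A / 4) ^ _)]
        exact ENNReal.ofReal_le_ofReal
          (mul_le_mul_of_nonneg_left (hweight w hw) (by positivity))
    _ = ENNReal.ofReal ((A / 4) ^ (-r / 2) * ((√A / 4) ^ ((finrank ℝ E : ℝ) - s) * K)) := by
        rw [lintegral_const_mul' _ _ ENNReal.ofReal_ne_top,
          setLIntegral_ball_norm_sub_rpow_neg μ hs hsn v (by positivity),
          ← ENNReal.ofReal_mul (by positivity)]
    _ ≤ ENNReal.ofReal (4 ^ (r / 2) * K * A ^ (-s / 2)) := by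
        rw [← mul_assoc, mul_right_comm (4 ^ (r / 2)) K]
        gcongr

theorem setLIntegral_compl_ball_norm_sub_rpow_mul_le {s r : ℝ} (hs : 0 ≤ s)
    (hnr : finrank ℝ E < r) (v : E) :
    ∫⁻ w in (ball v (√(1 + ‖v‖ ^ 2) / 4))ᶜ,
        ENNReal.ofReal (‖v - w‖ ^ (-s) * (1 + ‖w‖ ^ 2) ^ (-r / 2)) ∂μ ≤
      ENNReal.ofReal (4 ^ s * (∫ w, (1 + ‖w‖ ^ 2) ^ (-r / 2) ∂μ) * (1 + ‖v‖ ^ 2) ^ (-s / 2)) := by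
  set A := 1 + ‖v‖ ^ 2
  set J := ∫ w, (1 + ‖w‖ ^ 2) ^ (-r / 2) ∂μ
  have hradius : (√A / 4) ^ (-s) = 4 ^ s * A ^ (-s / 2) := by
    rw [Real.div_rpow (Real.sqrt_nonneg A) (by norm_num), Real.sqrt_eq_rpow,
      ← Real.rpow_mul (by positivity), div_eq_mul_inv, ← Real.rpow_neg (by norm_num), neg_neg,
      mul_comm]
    ring_nf
  have hkernel : ∀ w ∈ (ball v (√A / 4))ᶜ, ‖v - w‖ ^ (-s) ≤ 4 ^ s * A ^ (-s / 2) := by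
    intro w hw
    rw [Set.mem_compl_iff, mem_ball, not_lt, dist_comm, dist_eq_norm] at hw
    rw [← hradius]
    exact Real.rpow_le_rpow_of_nonpos (by positivity) hw (by linarith)
  calc ∫⁻ w in (ball v (√A / 4))ᶜ, ENNReal.ofReal (‖v - w‖ ^ (-s) * (1 + ‖w‖ ^ 2) ^ (-r / 2)) ∂μ
      ≤ ∫⁻ w, ENNReal.ofReal (4 ^ s * A ^ (-s / 2)) *
          ENNReal.ofReal ((1 + ‖w‖ ^ 2) ^ (-r / 2)) ∂μ := by
        refine (setLIntegral_mono' measurableSet_ball.compl fun w hw ↦ ?_).trans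
          (setLIntegral_le_lintegral _ _)
        rw [← ENNReal.ofReal_mul (by positivity)]
        exact ENNReal.ofReal_le_ofReal
          (mul_le_mul_of_nonneg_right (hkernel w hw) (by positivity))
    _ = ENNReal.ofReal (4 ^ s * J * A ^ (-s / 2)) := by
        rw [lintegral_const_mul' _ _ ENNReal.ofReal_ne_top, ← ofReal_integral_eq_lintegral_ofReal
          (integrable_rpow_neg_one_add_norm_sq hnr) (.of_forall fun w ↦ by positivity),
          ← ENNReal.ofReal_mul (by positivity), mul_right_comm]

theorem lintegral_norm_sub_rpow_mul_one_add_norm_sq_rpow_le {s r : ℝ} (hs : 0 ≤ s)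
    (hsn : s < finrank ℝ E) (hnr : finrank ℝ E < r) (v : E) :
    ∫⁻ w, ENNReal.ofReal (‖v - w‖ ^ (-s) * (1 + ‖w‖ ^ 2) ^ (-r / 2)) ∂μ ≤
      ENNReal.ofReal ((4 ^ (r / 2) * (∫ x in ball 0 1, ‖x‖ ^ (-s) ∂μ) +
        4 ^ s * ∫ w, (1 + ‖w‖ ^ 2) ^ (-r / 2) ∂μ) * (1 + ‖v‖ ^ 2) ^ (-s / 2)) := by
  rw [← lintegral_add_compl _ (measurableSet_ball (x := v) (ε := √(1 + ‖v‖ ^ 2) / 4)),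
    add_mul, ENNReal.ofReal_add (by positivity) (by positivity)]
  exact add_le_add (setLIntegral_ball_norm_sub_rpow_mul_le μ hs hsn hnr.le v)
    (setLIntegral_compl_ball_norm_sub_rpow_mul_le μ hs hnr v)

theorem integral_norm_sub_rpow_mul_one_add_norm_sq_rpow_le {s r : ℝ} (hs : 0 ≤ s)
    (hsn : s < finrank ℝ E) (hnr : finrank ℝ E < r) :
    ∃ C : ℝ, 0 < C ∧ ∀ v : E,
      ∫ w, ‖v - w‖ ^ (-s) * (1 + ‖w‖ ^ 2) ^ (-r / 2) ∂μ ≤ C * (1 + ‖v‖ ^ 2) ^ (-s / 2) := by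
  set C := 4 ^ (r / 2) * (∫ x in ball 0 1, ‖x‖ ^ (-s) ∂μ) +
    4 ^ s * ∫ w, (1 + ‖w‖ ^ 2) ^ (-r / 2) ∂μ
  refine ⟨C + 1, by positivity, fun v ↦ ?_⟩
  rw [integral_eq_lintegral_of_nonneg_ae (.of_forall fun w ↦ by positivity) (by fun_prop)]
  refine ENNReal.toReal_le_of_le_ofReal (by positivity) ?_
  refine (lintegral_norm_sub_rpow_mul_one_add_norm_sq_rpow_le μ hs hsn hnr v).trans ?_
  exact ENNReal.ofReal_le_ofReal
    (mul_le_mul_of_nonneg_right (le_add_of_nonneg_right zero_le_one) (by positivity))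
end

theorem riesz_potential_decay_general (d : ℕ) (s : ℝ) (hs0 : 0 < s) (hsd : s < d) :
    ∃ C : ℝ, 0 < C ∧ ∀ v : EuclideanSpace ℝ (Fin d),
      (∫ w : EuclideanSpace ℝ (Fin d),
          ‖v - w‖ ^ (-s) * (1 + ‖w‖ ^ 2) ^ (-((d : ℝ) + 1) / 2)) ≤
        C * (1 + ‖v‖ ^ 2) ^ (-s / 2) := by
  have hdim : (finrank ℝ (EuclideanSpace ℝ (Fin d)) : ℝ) = d := by simp
  exact integral_norm_sub_rpow_mul_one_add_norm_sq_rpow_le volume hs0.le (hdim ▸ hsd)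
    (by rw [hdim]; linarith)

theorem riesz_potential_decay (d : ℕ) (hd : 1 ≤ d) (s : ℝ) (hs0 : 0 < s) (hsd : s < d) :
    ∃ C : ℝ, 0 < C ∧ ∀ v : EuclideanSpace ℝ (Fin d),
      (∫ w : EuclideanSpace ℝ (Fin d),
          ‖v - w‖ ^ (-s) * (1 + ‖w‖ ^ 2) ^ (-((d : ℝ) + 1) / 2)) ≤
        C * (1 + ‖v‖ ^ 2) ^ (-s / 2) :=
  riesz_potential_decay_general d s hs0 hsd
end

section
/- Let d ≥ 2 and r₀ > 1/2. There exists a constant C > 0, depending only on d and r₀, such that for every v ∈ ℝ^d: ∫_{S^{d−1}} (1 + (ω·v)^2)^{-r₀} dσ(ω) ≤ C (1 + |v|^2)^{-1/2}, where σ is the surface (spherical) measure on the unit sphere S^{d−1} ⊂ ℝ^d. -/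
/-!
In polar coordinates the spherical average is at most `4 ^ r₀` times the integral of
`(1 + ⟪x, v⟫²)^(-r₀)` over the ball of radius `2`: on the shell `1 < ‖x‖ ≤ 2` the value at
`ω = x / ‖x‖` exceeds the value at `x` by a factor at most `4 ^ r₀`. Rotating `v` to `‖v‖ e₀`
and enclosing the ball in a cube reduces this to `∫_{-2}^{2} (1 + ‖v‖² t²)^(-r₀) dt`, which is
at most `4`, and, by scaling, at most `‖v‖⁻¹ ∫_ℝ (1 + a²)^(-r₀) da`; the last integral is finite
as `2 r₀ > 1`.
-/

open MeasureTheory Real Set Metric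

noncomputable def bracketDecay (r a : ℝ) : ℝ := (1 + a ^ 2) ^ (-r)

section OneDim

lemma bracketDecay_nonneg (r a : ℝ) : 0 ≤ bracketDecay r a := by
  unfold bracketDecay; positivity

@[fun_prop]
lemma continuous_bracketDecay (r : ℝ) : Continuous (bracketDecay r) := by
  unfold bracketDecay
  exact (continuous_const.add (continuous_pow 2)).rpow_const fun a ↦ Or.inl (by dsimp; positivity)

variable {r : ℝ}

lemma bracketDecay_le_one (hr : 0 ≤ r) (a : ℝ) : bracketDecay r a ≤ 1 :=
  rpow_le_one_of_one_le_of_nonpos (le_add_of_nonneg_right (sq_nonneg a)) (by linarith)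

lemma integrable_bracketDecay (hr : 1 / 2 < r) : Integrable (bracketDecay r) := by
  have := integrable_rpow_neg_one_add_norm_sq (E := ℝ) (μ := volume) (r := 2 * r)
    (by simp; linarith)
  refine this.congr (.of_forall fun a ↦ ?_)
  dsimp only
  rw [bracketDecay, norm_eq_abs, sq_abs, neg_div, mul_div_cancel_left₀ r two_ne_zero]

lemma bracketDecay_inv_mul_le (hr : 0 ≤ r) {t : ℝ} (ht₀ : 0 < t) (ht : t ≤ 2) (a : ℝ) :
    bracketDecay r (t⁻¹ * a) ≤ 4 ^ r * bracketDecay r a := by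
  have hquarter : (1 + a ^ 2) / 4 ≤ 1 + (t⁻¹ * a) ^ 2 := by
    have : a ^ 2 / 4 ≤ (t⁻¹ * a) ^ 2 := by
      rw [mul_pow, inv_pow, inv_mul_eq_div]
      gcongr; nlinarith
    linarith
  calc bracketDecay r (t⁻¹ * a) ≤ ((1 + a ^ 2) / 4) ^ (-r) :=
        rpow_le_rpow_of_nonpos (by positivity) hquarter (by linarith)
    _ = 4 ^ r * bracketDecay r a := by
        rw [div_rpow (by positivity) (by norm_num), rpow_neg (by norm_num : (0 : ℝ) ≤ 4),
          bracketDecay]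
        field_simp

lemma setIntegral_bracketDecay_comp_mul_le_volume (hr : 0 ≤ r) (c : ℝ) {s : Set ℝ}
    (hs : volume s < ⊤) :
    ∫ t in s, bracketDecay r (c * t) ≤ volume.real s := by
  refine (le_abs_self _).trans ?_
  simpa using norm_setIntegral_le_of_norm_le_const hs (C := 1)
    (f := fun t ↦ bracketDecay r (c * t))
    fun t _ ↦ by simpa [abs_of_nonneg (bracketDecay_nonneg r _)] using bracketDecay_le_one hr _

lemma setIntegral_bracketDecay_comp_mul_le_div (hr : 1 / 2 < r) {c : ℝ} (hc : 0 < c)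
    (s : Set ℝ) :
    ∫ t in s, bracketDecay r (c * t) ≤ (∫ a, bracketDecay r a) / c := by
  calc ∫ t in s, bracketDecay r (c * t) ≤ ∫ t, bracketDecay r (c * t) :=
        setIntegral_le_integral ((integrable_bracketDecay hr).comp_mul_left' hc.ne')
          (.of_forall fun _ ↦ bracketDecay_nonneg r _)
    _ = (∫ a, bracketDecay r a) / c := by
        rw [Measure.integral_comp_mul_left, abs_of_pos (inv_pos.2 hc), smul_eq_mul,
          inv_mul_eq_div]

lemma inv_one_add_le_one_add_sq_rpow {c : ℝ} (hc : 0 ≤ c) :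
    (1 + c)⁻¹ ≤ (1 + c ^ 2) ^ (-(1 : ℝ) / 2) := by
  rw [neg_div, rpow_neg (by positivity), ← sqrt_eq_rpow]
  gcongr
  rw [sqrt_le_left (by positivity)]
  nlinarith

lemma setIntegral_bracketDecay_comp_mul_le (hr : 1 / 2 < r) {s : Set ℝ} (hs : volume s < ⊤)
    {c : ℝ} (hc : 0 ≤ c) :
    ∫ t in s, bracketDecay r (c * t) ≤
      2 * (volume.real s + ∫ a, bracketDecay r a) * (1 + c ^ 2) ^ (-(1 : ℝ) / 2) := by
  have hK : 0 ≤ ∫ a, bracketDecay r a := integral_nonneg (bracketDecay_nonneg r)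
  have hvol : 0 ≤ volume.real s := measureReal_nonneg
  calc ∫ t in s, bracketDecay r (c * t)
      ≤ 2 * (volume.real s + ∫ a, bracketDecay r a) / (1 + c) := by
        rcases le_or_gt c 1 with hc1 | hc1
        · calc ∫ t in s, bracketDecay r (c * t) ≤ volume.real s :=
                setIntegral_bracketDecay_comp_mul_le_volume (by linarith) c hs
            _ ≤ _ := by rw [le_div_iff₀ (by positivity)]; nlinarith
        · calc ∫ t in s, bracketDecay r (c * t) ≤ (∫ a, bracketDecay r a) / c :=
                setIntegral_bracketDecay_comp_mul_le_div hr (by positivity) s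
            _ ≤ _ := by rw [div_le_div_iff₀ (by positivity) (by positivity)]; nlinarith
    _ ≤ _ := by
        rw [div_eq_mul_inv]
        gcongr
        exact inv_one_add_le_one_add_sq_rpow hc

end OneDim

section Polar

variable {E : Type*} [NormedAddCommGroup E] [NormedSpace ℝ E] [FiniteDimensional ℝ E]
  [MeasurableSpace E] [BorelSpace E] [Nontrivial E] (μ : Measure E) [μ.IsAddHaarMeasure]

theorem integral_comp_inv_norm_smul_mul_fun_norm_addHaar (F : E → ℝ) (g : ℝ → ℝ) :
    ∫ x, F (‖x‖⁻¹ • x) * g ‖x‖ ∂μ =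
      (∫ ω, F ω ∂μ.toSphere) * ∫ y in Ioi (0 : ℝ), y ^ (Module.finrank ℝ E - 1) * g y := by
  calc ∫ x, F (‖x‖⁻¹ • x) * g ‖x‖ ∂μ
      = ∫ x : ({(0)}ᶜ : Set E), F (‖x.1‖⁻¹ • x.1) * g ‖x.1‖ ∂(μ.comap (↑)) := by
        rw [integral_subtype_comap (measurableSet_singleton _).compl
          fun x ↦ F (‖x‖⁻¹ • x) * g ‖x‖, restrict_compl_singleton]
    _ = ∫ p, F p.1 * g p.2 ∂μ.toSphere.prod (.volumeIoiPow (Module.finrank ℝ E - 1)) := by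
        simpa using (μ.measurePreserving_homeomorphUnitSphereProd.integral_comp
          (Homeomorph.measurableEmbedding _) fun p ↦ F p.1 * g p.2)
    _ = _ := by
        rw [integral_prod_mul (fun ω : sphere (0 : E) 1 ↦ F ω) fun y : Ioi (0 : ℝ) ↦ g y]
        congr 1
        simp only [Measure.volumeIoiPow, ENNReal.ofReal]
        rw [integral_withDensity_eq_integral_smul
            ((measurable_subtype_coe.pow_const _).real_toNNReal),
          integral_subtype_comap measurableSet_Ioi
            fun y ↦ (y ^ (Module.finrank ℝ E - 1)).toNNReal • g y]
        refine setIntegral_congr_fun measurableSet_Ioi fun y hy ↦ ?_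
        rw [NNReal.smul_def, Real.coe_toNNReal _ (pow_nonneg hy.out.le _), smul_eq_mul]

end Polar

lemma one_le_setIntegral_Ioi_pow_mul_indicator_Ioc (n : ℕ) :
    1 ≤ ∫ y in Ioi (0 : ℝ), y ^ n * (Ioc (1 : ℝ) 2).indicator 1 y := by
  have hind : (fun y : ℝ ↦ y ^ n * (Ioc (1 : ℝ) 2).indicator 1 y) =
      (Ioc 1 2).indicator (· ^ n) := by
    ext y; by_cases hy : y ∈ Ioc (1 : ℝ) 2 <;> simp [hy]
  rw [hind, setIntegral_indicator measurableSet_Ioc,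
    inter_eq_right.2 (Ioc_subset_Ioi_self.trans (Ioi_subset_Ioi zero_le_one))]
  calc (1 : ℝ) = ∫ _ in Ioc (1 : ℝ) 2, (1 : ℝ) := by simp; norm_num
    _ ≤ ∫ y in Ioc (1 : ℝ) 2, y ^ n :=
        setIntegral_mono_on (integrableOn_const measure_Ioc_lt_top.ne)
          (intervalIntegral.intervalIntegrable_pow n).1 measurableSet_Ioc
          fun y hy ↦ one_le_pow₀ hy.1.le

section InnerProductSpace

open RealInnerProductSpace

variable {E : Type*} [NormedAddCommGroup E] [InnerProductSpace ℝ E] [FiniteDimensional ℝ E]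
  [MeasurableSpace E] [BorelSpace E]

theorem integral_toSphere_bracketDecay_inner_le [Nontrivial E] (μ : Measure E)
    [μ.IsAddHaarMeasure] {r : ℝ} (hr : 0 ≤ r) (v : E) :
    ∫ ω, bracketDecay r ⟪(ω : E), v⟫ ∂μ.toSphere ≤
      4 ^ r * ∫ x in closedBall 0 2, bracketDecay r ⟪x, v⟫ ∂μ := by
  set I := ∫ ω, bracketDecay r ⟪(ω : E), v⟫ ∂μ.toSphere
  have hI : 0 ≤ I := integral_nonneg fun _ ↦ bracketDecay_nonneg r _
  calc I ≤ I * ∫ y in Ioi (0 : ℝ), y ^ (Module.finrank ℝ E - 1) * (Ioc 1 2).indicator 1 y :=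
        le_mul_of_one_le_right hI (one_le_setIntegral_Ioi_pow_mul_indicator_Ioc _)
    _ = ∫ x, bracketDecay r ⟪‖x‖⁻¹ • x, v⟫ * (Ioc 1 2).indicator 1 ‖x‖ ∂μ :=
        (integral_comp_inv_norm_smul_mul_fun_norm_addHaar μ (fun x ↦ bracketDecay r ⟪x, v⟫) _).symm
    _ ≤ ∫ x, (closedBall (0 : E) 2).indicator (fun x ↦ 4 ^ r * bracketDecay r ⟪x, v⟫) x ∂μ := by
        refine integral_mono_of_nonneg (.of_forall fun x ↦ ?_) ?_ (.of_forall fun x ↦ ?_)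
        · exact mul_nonneg (bracketDecay_nonneg r _) (indicator_nonneg (fun _ _ ↦ zero_le_one) _)
        · refine IntegrableOn.integrable_indicator ?_ measurableSet_closedBall
          exact (Continuous.continuousOn (by fun_prop)).integrableOn_compact
            (isCompact_closedBall _ _)
        · dsimp only
          by_cases hx : ‖x‖ ∈ Ioc (1 : ℝ) 2
          · rw [indicator_of_mem hx, indicator_of_mem (mem_closedBall_zero_iff.2 hx.2),
              Pi.one_apply, mul_one, real_inner_smul_left]
            exact bracketDecay_inv_mul_le hr (by linarith [hx.1]) hx.2 _
          · rw [indicator_of_notMem hx, mul_zero]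
            exact indicator_nonneg
              (fun y _ ↦ mul_nonneg (by positivity) (bracketDecay_nonneg r _)) _
    _ = 4 ^ r * ∫ x in closedBall 0 2, bracketDecay r ⟪x, v⟫ ∂μ := by
        rw [integral_indicator measurableSet_closedBall, integral_const_mul]

theorem setIntegral_closedBall_comp_inner_eq_of_norm_eq (h : ℝ → ℝ) (R : ℝ) {v w : E}
    (hvw : ‖v‖ = ‖w‖) :
    ∫ x in closedBall 0 R, h ⟪x, v⟫ = ∫ x in closedBall 0 R, h ⟪x, w⟫ := by
  set T : E ≃ₗᵢ[ℝ] E := Submodule.reflection (ℝ ∙ (w - v))ᗮ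
  have hTw : T w = v := Submodule.reflection_sub hvw.symm
  have hball : T ⁻¹' closedBall 0 R = closedBall 0 R := by
    rw [T.preimage_closedBall, map_zero]
  rw [← T.measurePreserving.setIntegral_preimage_emb T.toMeasurableEquiv.measurableEmbedding,
    hball]
  simp_rw [← hTw, T.inner_map_map]

end InnerProductSpace

theorem setIntegral_closedBall_comp_apply_zero_le {n : ℕ} {R : ℝ} (hR : 0 ≤ R) {h : ℝ → ℝ}
    (hh : 0 ≤ h) (hint : IntegrableOn h (Icc (-R) R)) :
    ∫ x in closedBall (0 : EuclideanSpace ℝ (Fin (n + 1))) R, h (x 0) ≤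
      (2 * R) ^ n * ∫ t in Icc (-R) R, h t := by
  let e : EuclideanSpace ℝ (Fin (n + 1)) ≃ᵐ ℝ × (Fin n → ℝ) :=
    (MeasurableEquiv.toLp 2 _).symm.trans (MeasurableEquiv.piFinSuccAbove (fun _ ↦ ℝ) 0)
  have he : MeasurePreserving e :=
    (EuclideanSpace.volume_preserving_symm_measurableEquiv_toLp _).trans
      (volume_preserving_piFinSuccAbove (fun _ ↦ ℝ) 0)
  let cube : Set (Fin n → ℝ) := Icc (fun _ ↦ -R) fun _ ↦ R
  have : IsFiniteMeasure (volume.restrict cube) :=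
    isFiniteMeasure_restrict.2 isCompact_Icc.measure_ne_top
  have hprod : volume.restrict (Icc (-R) R ×ˢ cube) =
      (volume.restrict (Icc (-R) R)).prod (volume.restrict cube) := by
    rw [Measure.volume_eq_prod, Measure.prod_restrict]
  have hball : closedBall 0 R ⊆ e ⁻¹' (Icc (-R) R ×ˢ cube) := by
    intro x hx
    have hcoord : ∀ i, x i ∈ Icc (-R) R := fun i ↦
      abs_le.1 ((PiLp.norm_apply_le x i).trans (mem_closedBall_zero_iff.1 hx))
    exact ⟨hcoord 0, fun j ↦ (hcoord j.succ).1, fun j ↦ (hcoord j.succ).2⟩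
  calc ∫ x in closedBall (0 : EuclideanSpace ℝ (Fin (n + 1))) R, h (x 0)
      ≤ ∫ x in e ⁻¹' (Icc (-R) R ×ˢ cube), h (e x).1 := by
        refine setIntegral_mono_set ?_ (.of_forall fun x ↦ hh _) hball.eventuallyLE
        refine (he.integrableOn_comp_preimage e.measurableEmbedding (f := fun p ↦ h p.1)).2 ?_
        rw [IntegrableOn, hprod]
        exact hint.comp_fst _
    _ = ∫ p in Icc (-R) R ×ˢ cube, h p.1 :=
        he.setIntegral_preimage_emb e.measurableEmbedding (fun p ↦ h p.1) _
    _ = volume.real cube * ∫ t in Icc (-R) R, h t := by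
        rw [hprod, integral_fun_fst, measureReal_restrict_apply_univ, smul_eq_mul]
    _ = (2 * R) ^ n * ∫ t in Icc (-R) R, h t := by
        rw [measureReal_def, volume_Icc_pi_toReal fun _ ↦ by linarith]
        simp [two_mul]

theorem integral_toSphere_bracketDecay_inner_le_setIntegral_Icc {n : ℕ} {r : ℝ} (hr : 0 ≤ r)
    (v : EuclideanSpace ℝ (Fin (n + 1))) :
    ∫ ω, bracketDecay r (inner ℝ (ω : EuclideanSpace ℝ (Fin (n + 1))) v)
        ∂(volume : Measure (EuclideanSpace ℝ (Fin (n + 1)))).toSphere ≤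
      4 ^ r * 4 ^ n * ∫ t in Icc (-2) 2, bracketDecay r (‖v‖ * t) := by
  have hv : ‖EuclideanSpace.single (0 : Fin (n + 1)) ‖v‖‖ = ‖v‖ := by simp
  calc _ ≤ 4 ^ r * ∫ x in closedBall 0 2, bracketDecay r (inner ℝ x v) :=
        integral_toSphere_bracketDecay_inner_le _ hr v
    _ = 4 ^ r * ∫ x in closedBall (0 : EuclideanSpace ℝ (Fin (n + 1))) 2,
          bracketDecay r (‖v‖ * x 0) := by
        rw [setIntegral_closedBall_comp_inner_eq_of_norm_eq _ _ hv.symm]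
        simp [EuclideanSpace.inner_single_right]
    _ ≤ 4 ^ r * ((2 * 2) ^ n * ∫ t in Icc (-2) 2, bracketDecay r (‖v‖ * t)) := by
        gcongr
        exact setIntegral_closedBall_comp_apply_zero_le zero_le_two
          (fun t ↦ bracketDecay_nonneg r (‖v‖ * t)) (Continuous.integrableOn_Icc (by fun_prop))
    _ = 4 ^ r * 4 ^ n * ∫ t in Icc (-2) 2, bracketDecay r (‖v‖ * t) := by ring

theorem sphere_average_decay (d : ℕ) (hd : 2 ≤ d) (r₀ : ℝ) (hr₀ : 1 / 2 < r₀) :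
    ∃ C : ℝ, 0 < C ∧ ∀ v : EuclideanSpace ℝ (Fin d),
      (∫ ω : Metric.sphere (0 : EuclideanSpace ℝ (Fin d)) 1,
          (1 + (inner ℝ (ω : EuclideanSpace ℝ (Fin d)) v : ℝ) ^ 2) ^ (-r₀)
          ∂((volume : Measure (EuclideanSpace ℝ (Fin d))).toSphere)) ≤
        C * (1 + ‖v‖ ^ 2) ^ (-(1 : ℝ) / 2) := by
  obtain ⟨n, rfl⟩ : ∃ n, d = n + 1 := ⟨d - 1, by omega⟩
  set M := 2 * (volume.real (Icc (-2 : ℝ) 2) + ∫ a, bracketDecay r₀ a)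
  have hM : 0 < M := by
    have : 0 ≤ ∫ a, bracketDecay r₀ a := integral_nonneg (bracketDecay_nonneg r₀)
    simp only [M, Real.volume_real_Icc]
    norm_num
    linarith
  refine ⟨4 ^ r₀ * 4 ^ n * M, by positivity, fun v ↦ ?_⟩
  calc _ ≤ 4 ^ r₀ * 4 ^ n * ∫ t in Icc (-2) 2, bracketDecay r₀ (‖v‖ * t) :=
        integral_toSphere_bracketDecay_inner_le_setIntegral_Icc (by linarith) v
    _ ≤ 4 ^ r₀ * 4 ^ n * (M * (1 + ‖v‖ ^ 2) ^ (-(1 : ℝ) / 2)) := by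
        gcongr
        exact setIntegral_bracketDecay_comp_mul_le hr₀ measure_Icc_lt_top (norm_nonneg v)
    _ = 4 ^ r₀ * 4 ^ n * M * (1 + ‖v‖ ^ 2) ^ (-(1 : ℝ) / 2) := by ring
end

section
/- Let C₀ > 0, ε ∈ (0,1), and m > 0. There exists a constant C' > 0 such that for every t ≥ 0: exp(−⟨t⟩^{1−ε}/((1−ε)C₀)) + ∫_0^t exp(−(⟨t⟩^{1−ε} − ⟨s⟩^{1−ε})/((1−ε)C₀)) · ⟨s⟩^{-m-ε} ds ≤ C' ⟨t⟩^{-m}. -/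
/-! Multiplying by the integrating factor `W t = exp (⟨t⟩^(1-ε) / ((1-ε) C₀))` turns the claim into
`1 + ∫₀ᵗ W s ⟨s⟩^(-m-ε) ds ≤ C' W t ⟨t⟩^(-m)`. The derivative
`W t · t ⟨t⟩^(-m-2) (⟨t⟩^(1-ε) / C₀ - m)` of the right-hand side dominates `W t ⟨t⟩^(-m-ε) / (4 C₀)`
as soon as `t ≥ 1` and `⟨t⟩^(1-ε) ≥ 2 m C₀`, so beyond such a time `T` the comparison principle
propagates the bound; on `[0, T]` the left side is at most its value at `T` and `W ⟨t⟩^(-m)` is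
bounded below by `⟨T⟩^(-|m|)`. -/

noncomputable def jb (t : ℝ) : ℝ := Real.sqrt (1 + t ^ 2)

open Real Set Filter

lemma jb_pos (t : ℝ) : 0 < jb t := sqrt_pos.2 (by positivity)

lemma one_le_jb (t : ℝ) : 1 ≤ jb t := one_le_sqrt.2 (by nlinarith [sq_nonneg t])

lemma le_jb (t : ℝ) : t ≤ jb t := le_sqrt_of_sq_le (by linarith)

lemma jb_le_jb {s t : ℝ} (hs : 0 ≤ s) (hst : s ≤ t) : jb s ≤ jb t :=
  sqrt_le_sqrt (by nlinarith)

lemma jb_le_two_mul {t : ℝ} (ht : 1 ≤ t) : jb t ≤ 2 * t :=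
  sqrt_le_iff.2 ⟨by linarith, by nlinarith⟩

lemma continuous_jb : Continuous jb := by unfold jb; fun_prop

lemma tendsto_jb_atTop : Tendsto jb atTop atTop := tendsto_atTop_mono le_jb tendsto_id

lemma hasDerivAt_jb (t : ℝ) : HasDerivAt jb (t / jb t) t := by
  unfold jb
  convert ((hasDerivAt_pow 2 t).const_add 1).sqrt (by positivity) using 1
  norm_num [mul_div_mul_left _ _ (two_ne_zero (α := ℝ))]

lemma hasDerivAt_jb_rpow (p t : ℝ) :
    HasDerivAt (fun t => jb t ^ p) (p * t * jb t ^ (p - 2)) t := by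
  convert (hasDerivAt_jb t).rpow_const (p := p) (Or.inl (jb_pos t).ne') using 1
  rw [show p - 1 = p - 2 + 1 by ring, rpow_add_one (jb_pos t).ne']
  field_simp [(jb_pos t).ne']

noncomputable def expWeight (C₀ ε t : ℝ) : ℝ := exp (jb t ^ (1 - ε) / ((1 - ε) * C₀))

section expWeight

variable {C₀ ε : ℝ}

lemma expWeight_pos (t : ℝ) : 0 < expWeight C₀ ε t := exp_pos _

lemma one_le_expWeight (hC₀ : 0 < C₀) (hε : ε < 1) (t : ℝ) : 1 ≤ expWeight C₀ ε t :=
  one_le_exp (div_nonneg (rpow_nonneg (jb_pos t).le _) (mul_pos (sub_pos.2 hε) hC₀).le)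

lemma continuous_expWeight : Continuous (expWeight C₀ ε) :=
  continuous_exp.comp ((continuous_jb.rpow_const fun t => Or.inl (jb_pos t).ne').div_const _)

lemma hasDerivAt_expWeight (hε : ε ≠ 1) (t : ℝ) :
    HasDerivAt (expWeight C₀ ε) (expWeight C₀ ε t * (t * jb t ^ (-1 - ε) / C₀)) t := by
  refine ((hasDerivAt_jb_rpow (1 - ε) t).div_const ((1 - ε) * C₀)).exp.congr_deriv ?_
  rw [mul_assoc, mul_div_mul_left _ _ (sub_ne_zero.2 hε.symm), show 1 - ε - 2 = -1 - ε by ring]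
  rfl

variable (m : ℝ)

lemma hasDerivAt_expWeight_mul_jb_rpow (hε : ε ≠ 1) (t : ℝ) :
    HasDerivAt (fun t => expWeight C₀ ε t * jb t ^ (-m))
      (expWeight C₀ ε t * (t * jb t ^ (-m - 2) * (jb t ^ (1 - ε) / C₀ - m))) t := by
  refine ((hasDerivAt_expWeight hε t).mul (hasDerivAt_jb_rpow (-m) t)).congr_deriv ?_
  have hJ := jb_pos t
  have hexp : jb t ^ (-1 - ε) * jb t ^ (-m) = jb t ^ (-m - 2) * jb t ^ (1 - ε) := by
    rw [← rpow_add hJ, ← rpow_add hJ]; ring_nf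
  linear_combination (expWeight C₀ ε t * t / C₀) * hexp

lemma expWeight_mul_jb_rpow_le (hC₀ : 0 < C₀) {t : ℝ} (ht : 1 ≤ t)
    (hmt : 2 * m * C₀ ≤ jb t ^ (1 - ε)) :
    expWeight C₀ ε t * jb t ^ (-m - ε) ≤
      4 * C₀ * (expWeight C₀ ε t * (t * jb t ^ (-m - 2) * (jb t ^ (1 - ε) / C₀ - m))) := by
  have hJ := jb_pos t
  have ht0 : 0 ≤ t := by linarith
  have hW := (expWeight_pos (C₀ := C₀) (ε := ε) t).le
  set P := jb t ^ (-m - 2)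
  set X := jb t ^ (1 - ε)
  have hsplit : jb t ^ (-m - ε) = jb t * (P * X) := by
    rw [← rpow_add hJ, mul_comm, ← rpow_add_one hJ.ne']; ring_nf
  have hm : X / (2 * C₀) ≤ X / C₀ - m := by
    have hmX : m ≤ X / (2 * C₀) := by rw [le_div_iff₀ (by positivity)]; linarith
    have hX : X / C₀ = X / (2 * C₀) + X / (2 * C₀) := by field_simp; ring
    linarith
  calc expWeight C₀ ε t * jb t ^ (-m - ε) = expWeight C₀ ε t * (jb t * (P * X)) := by rw [hsplit]
    _ ≤ expWeight C₀ ε t * (2 * t * (P * X)) := by gcongr; exact jb_le_two_mul ht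
    _ = 4 * C₀ * (expWeight C₀ ε t * (t * P * (X / (2 * C₀)))) := by field_simp; ring
    _ ≤ 4 * C₀ * (expWeight C₀ ε t * (t * P * (X / C₀ - m))) := by gcongr

end expWeight

lemma add_intervalIntegral_le_of_le_deriv {g G G' : ℝ → ℝ} {a c T t : ℝ} (hg : Continuous g)
    (hG : ∀ x, HasDerivAt G (G' x) x) (hT : c + ∫ x in a..T, g x ≤ G T)
    (hgG : ∀ x, T ≤ x → g x ≤ G' x) (ht : T ≤ t) : c + ∫ x in a..t, g x ≤ G t := by
  have hF : ∀ x, HasDerivAt (fun y => c + ∫ x in a..y, g x) (g x) x := fun x =>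
    ((hg.integral_hasStrictDerivAt a x).hasDerivAt).const_add c
  refine image_le_of_deriv_right_le_deriv_boundary
    (fun x _ => (hF x).continuousAt.continuousWithinAt) (fun x _ => (hF x).hasDerivWithinAt)
    hT (fun x _ => (hG x).continuousAt.continuousWithinAt) (fun x _ => (hG x).hasDerivWithinAt)
    (fun x hx => hgG x hx.1) ⟨ht, le_rfl⟩

lemma jb_rpow_neg_abs_le {m s t : ℝ} (hs : 0 ≤ s) (hst : s ≤ t) : jb t ^ (-|m|) ≤ jb s ^ (-m) :=
  calc jb t ^ (-|m|) ≤ jb s ^ (-|m|) :=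
        rpow_le_rpow_of_nonpos (jb_pos s) (jb_le_jb hs hst) (neg_nonpos.2 (abs_nonneg m))
    _ ≤ jb s ^ (-m) := rpow_le_rpow_of_exponent_le (one_le_jb s) (neg_le_neg (le_abs_self m))

lemma exists_forall_ge_jb_rpow_ge {p : ℝ} (hp : 0 < p) (b : ℝ) :
    ∃ T, 1 ≤ T ∧ ∀ t, T ≤ t → b ≤ jb t ^ p := by
  obtain ⟨T, hT⟩ := eventually_atTop.1
    ((((tendsto_rpow_atTop hp).comp tendsto_jb_atTop).eventually_ge_atTop b).and
      (eventually_ge_atTop 1))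
  exact ⟨max T 1, le_max_right _ _, fun t ht => (hT t (le_of_max_le_left ht)).1⟩

theorem exists_one_add_integral_le (C₀ ε m : ℝ) (hC₀ : 0 < C₀) (hε : ε < 1) :
    ∃ C' : ℝ, 0 < C' ∧ ∀ t : ℝ, 0 ≤ t →
      1 + ∫ s in (0 : ℝ)..t, expWeight C₀ ε s * jb s ^ (-m - ε) ≤
        C' * (expWeight C₀ ε t * jb t ^ (-m)) := by
  set g := fun s => expWeight C₀ ε s * jb s ^ (-m - ε)
  have hg : Continuous g :=
    continuous_expWeight.mul (continuous_jb.rpow_const fun t => Or.inl (jb_pos t).ne')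
  have hg0 : ∀ s, 0 ≤ g s := fun s =>
    mul_nonneg (expWeight_pos s).le (rpow_nonneg (jb_pos s).le _)
  obtain ⟨T, hT1, hT⟩ := exists_forall_ge_jb_rpow_ge (sub_pos.2 hε) (2 * m * C₀)
  set C' := max (4 * C₀) ((1 + ∫ s in (0 : ℝ)..T, g s) * jb T ^ |m|)
  have hsmall : ∀ t, 0 ≤ t → t ≤ T → 1 + ∫ s in (0 : ℝ)..t, g s ≤
      C' * (expWeight C₀ ε t * jb t ^ (-m)) := by
    intro t ht0 htT
    have hC' : 0 ≤ C' := le_max_of_le_left (by positivity)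
    calc 1 + ∫ s in (0 : ℝ)..t, g s ≤ 1 + ∫ s in (0 : ℝ)..T, g s := by
          gcongr
          exact intervalIntegral.integral_mono_interval le_rfl ht0 htT
            (MeasureTheory.ae_of_all _ hg0) (hg.intervalIntegrable _ _)
      _ = ((1 + ∫ s in (0 : ℝ)..T, g s) * jb T ^ |m|) * jb T ^ (-|m|) := by
          rw [mul_assoc, ← rpow_add (jb_pos T), add_neg_cancel, rpow_zero, mul_one]
      _ ≤ C' * (1 * jb t ^ (-m)) := by
          rw [one_mul]
          exact mul_le_mul (le_max_right _ _) (jb_rpow_neg_abs_le ht0 htT)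
            (rpow_nonneg (jb_pos T).le _) hC'
      _ ≤ C' * (expWeight C₀ ε t * jb t ^ (-m)) := by
          gcongr
          · exact rpow_nonneg (jb_pos t).le _
          · exact one_le_expWeight hC₀ hε t
  refine ⟨C', lt_max_of_lt_left (by positivity), fun t ht0 => ?_⟩
  rcases le_total t T with htT | hTt
  · exact hsmall t ht0 htT
  refine add_intervalIntegral_le_of_le_deriv hg
    (fun x => (hasDerivAt_expWeight_mul_jb_rpow m hε.ne x).const_mul C')
    (hsmall T (by linarith) le_rfl) (fun x hx => ?_) hTt
  have h := expWeight_mul_jb_rpow_le m hC₀ (hT1.trans hx) (hT x hx)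
  have hG' := nonneg_of_mul_nonneg_right ((hg0 x).trans h) (by positivity)
  exact h.trans (mul_le_mul_of_nonneg_right (le_max_left _ _) hG')

lemma exp_add_integral_eq (C₀ ε m : ℝ) {t : ℝ} (ht : 0 ≤ t) :
    exp (-(jb t) ^ (1 - ε) / ((1 - ε) * C₀)) +
        (∫ s in Icc (0 : ℝ) t,
          exp (-((jb t) ^ (1 - ε) - (jb s) ^ (1 - ε)) / ((1 - ε) * C₀)) * (jb s) ^ (-m - ε)) =
      (expWeight C₀ ε t)⁻¹ * (1 + ∫ s in (0 : ℝ)..t, expWeight C₀ ε s * jb s ^ (-m - ε)) := by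
  have hpt : ∀ s, exp (-((jb t) ^ (1 - ε) - (jb s) ^ (1 - ε)) / ((1 - ε) * C₀)) * jb s ^ (-m - ε)
      = (expWeight C₀ ε t)⁻¹ * (expWeight C₀ ε s * jb s ^ (-m - ε)) := fun s => by
    rw [neg_sub, sub_div, exp_sub, expWeight, expWeight]
    ring
  simp_rw [hpt]
  rw [MeasureTheory.integral_Icc_eq_integral_Ioc, ← intervalIntegral.integral_of_le ht,
    intervalIntegral.integral_const_mul, mul_add, mul_one, neg_div, exp_neg, expWeight]

theorem polynomial_decay_convolution_estimate_general (C₀ : ℝ) (hC₀ : 0 < C₀)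
    (ε : ℝ) (hε : ε ∈ Set.Ioo (0 : ℝ) 1) (m : ℝ) :
    ∃ C' : ℝ, 0 < C' ∧ ∀ t : ℝ, 0 ≤ t →
      Real.exp (-(jb t) ^ (1 - ε) / ((1 - ε) * C₀)) +
        (∫ s in Set.Icc (0 : ℝ) t,
          Real.exp (-((jb t) ^ (1 - ε) - (jb s) ^ (1 - ε)) / ((1 - ε) * C₀)) *
            (jb s) ^ (-m - ε)) ≤
      C' * (jb t) ^ (-m) := by
  obtain ⟨C', hC', hbound⟩ := exists_one_add_integral_le C₀ ε m hC₀ hε.2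
  refine ⟨C', hC', fun t ht => ?_⟩
  have hW := expWeight_pos (C₀ := C₀) (ε := ε) t
  calc _ = (expWeight C₀ ε t)⁻¹ * (1 + ∫ s in (0 : ℝ)..t, expWeight C₀ ε s * jb s ^ (-m - ε)) :=
        exp_add_integral_eq C₀ ε m ht
    _ ≤ (expWeight C₀ ε t)⁻¹ * (C' * (expWeight C₀ ε t * jb t ^ (-m))) := by
        gcongr; exact hbound t ht
    _ = C' * jb t ^ (-m) := by field_simp

theorem polynomial_decay_convolution_estimate (C₀ : ℝ) (hC₀ : 0 < C₀)
    (ε : ℝ) (hε : ε ∈ Set.Ioo (0 : ℝ) 1) (m : ℝ) (hm : 0 < m) :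
    ∃ C' : ℝ, 0 < C' ∧ ∀ t : ℝ, 0 ≤ t →
      Real.exp (-(jb t) ^ (1 - ε) / ((1 - ε) * C₀)) +
        (∫ s in Set.Icc (0 : ℝ) t,
          Real.exp (-((jb t) ^ (1 - ε) - (jb s) ^ (1 - ε)) / ((1 - ε) * C₀)) *
            (jb s) ^ (-m - ε)) ≤
      C' * (jb t) ^ (-m) :=
  polynomial_decay_convolution_estimate_general C₀ hC₀ ε hε m
end
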